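/- Let V be a right-symmetric (pre-Lie) algebra and a(z), b(z), c(z) pairwise mutually local formal distributions over V, with locality values N(a,b), N(a,c), N(b,c) (in both orders). Then for every n ∈ ℤ₊ the pair ((a₍ₙ₎b)(z), c(z)) is local, with locality value at most N(a,b) + N(a,c) + N(b,c) − n. -/

import Mathlib

variable {k V : Type*} [Field k] [CharZero k] [AddCommGroup V] [Module k V]

/-- `Σ_{s=0}^{N} (−1)^s C(N,s) x_{n−s} ∘ y_{m+s}`. -/
def locSum (mul : V →ₗ[k] V →ₗ[k] V) (x y : ℤ → V) (N : ℕ) (n m : ℤ) : V :=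
  ∑ s ∈ Finset.range (N + 1),
    ((-1) ^ s * (N.choose s) : ℤ) • mul (x (n - (s : ℤ))) (y (m + (s : ℤ)))

/-- The `n`-th product `(a₍ₙ₎b)ₘ = Σ_{s≥0} (−1)^s C(n,s) a_{n−s} ∘ b_{m+s}`. -/
def nProd (mul : V →ₗ[k] V →ₗ[k] V) (a b : ℤ → V) (n : ℕ) : ℤ → V :=
  fun m => locSum mul a b n (n : ℤ) m

/-!
Index the triple products `(aᵢ ∘ bⱼ) ∘ c_l` by `ℤ³` and let `X`, `Y` be the translations of the
index by `(-1, 1, 0)` and `(0, -1, 1)`. Locality of `(a₍ₙ₎b, c)` with value `M` says that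
`(1 - Y)^M (1 - X)^n F` vanishes on `{n} × ℤ²`, where `F = (a ∘ b) ∘ c`. Locality of `(a, b)`
gives `(1 - X)^Nab F = 0`; right-symmetry splits `F = G + H` with `G = (a ∘ c) ∘ b`, killed by
`(1 - XY)^Nac`, and `H = a ∘ (b ∘ c - c ∘ b)`, killed by `(1 - Y)^Nbc`. For `x = 1 - X`,
`y = 1 - Y` one has `1 - XY = x + y - xy`, and `x^α y^β` lies in the ideal generated by
`x^A y^B` and `(x + y - xy)^C` as soon as `α + β ≥ A + B + C` and `β ≥ B` (the Dong lemma).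
-/

open Finset

theorem Ideal.pow_mul_pow_mul_pow_mem {R : Type*} [CommRing R] {I : Ideal R} {x y : R}
    {A B C : ℕ} (hAB : x ^ A * y ^ B ∈ I) (hC : (x + y - x * y) ^ C ∈ I) (α β γ : ℕ)
    (hβ : B ≤ β) (h : A + B + C ≤ α + β + γ) : x ^ α * y ^ β * (x + y - x * y) ^ γ ∈ I := by
  rcases le_or_gt C γ with hγ | hγ
  · obtain ⟨e, rfl⟩ := Nat.exists_eq_add_of_le hγ
    rw [pow_add, ← mul_assoc, mul_right_comm]
    exact I.mul_mem_left _ hC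
  rcases le_or_gt A α with hα | hα
  · obtain ⟨e, rfl⟩ := Nat.exists_eq_add_of_le hα
    obtain ⟨f, rfl⟩ := Nat.exists_eq_add_of_le hβ
    have hfactor : x ^ (A + e) * y ^ (B + f) * (x + y - x * y) ^ γ
        = x ^ e * y ^ f * (x + y - x * y) ^ γ * (x ^ A * y ^ B) := by ring
    rw [hfactor]
    exact I.mul_mem_left _ hAB
  obtain ⟨β, rfl⟩ : ∃ β', β = β' + 1 := ⟨β - 1, by omega⟩
  -- `y = (x + y - x y) - x + x y` keeps the total degree while `α` or `γ` grows.
  have expand : x ^ α * y ^ (β + 1) * (x + y - x * y) ^ γ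
      = x ^ α * y ^ β * (x + y - x * y) ^ (γ + 1) - x ^ (α + 1) * y ^ β * (x + y - x * y) ^ γ
        + x ^ (α + 1) * y ^ (β + 1) * (x + y - x * y) ^ γ := by ring
  rw [expand]
  exact I.add_mem (I.sub_mem (pow_mul_pow_mul_pow_mem hAB hC α β (γ + 1) (by omega) (by omega))
    (pow_mul_pow_mul_pow_mem hAB hC (α + 1) β γ (by omega) (by omega)))
    (pow_mul_pow_mul_pow_mem hAB hC (α + 1) (β + 1) γ (by omega) (by omega))
termination_by (A - α) + (C - γ)

open scoped IsMulCommutative in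
theorem Commute.pow_mul_pow_smul_eq_zero {R M : Type*} [Ring R] [AddCommGroup M] [Module R M]
    {x y : R} (hxy : Commute x y) {v : M} {A B C α β : ℕ} (hAB : (x ^ A * y ^ B) • v = 0)
    (hC : (x + y - x * y) ^ C • v = 0) (hβ : B ≤ β) (h : A + B + C ≤ α + β) :
    (x ^ α * y ^ β) • v = 0 := by
  let S := Subring.closure {x, y}
  have : IsMulCommutative S := Subring.isMulCommutative_closure (by
    rintro a (rfl | rfl) b (rfl | rfl) <;> first | rfl | exact hxy.eq | exact hxy.eq.symm)
  let x' : S := ⟨x, Subring.subset_closure (by simp)⟩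
  let y' : S := ⟨y, Subring.subset_closure (by simp)⟩
  let I : Ideal S := Ideal.comap S.subtype (LinearMap.ker (LinearMap.toSpanSingleton R M v))
  have hmem : ∀ s : S, s ∈ I ↔ (s : R) • v = 0 := fun s => by simp [I]
  have hS := Ideal.pow_mul_pow_mul_pow_mem (I := I) (x := x') (y := y')
    ((hmem _).2 hAB) ((hmem _).2 hC) α β 0 hβ (by omega)
  simpa [hmem] using hS

theorem Commute.pow_mul_pow_smul_eq_zero_of_eq_add {R M : Type*} [Ring R] [AddCommGroup M]
    [Module R M] {x y : R} (hxy : Commute x y) {F G H : M} (hFGH : F = G + H) {A B C : ℕ}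
    (hF : x ^ A • F = 0) (hH : y ^ B • H = 0) (hG : (x + y - x * y) ^ C • G = 0) {α β : ℕ}
    (h : A + B + C ≤ α + β) : (x ^ α * y ^ β) • F = 0 := by
  rcases le_or_gt A α with hα | hα
  · obtain ⟨e, rfl⟩ : ∃ e, α = e + A := ⟨α - A, by omega⟩
    rw [(hxy.pow_pow _ _).eq, pow_add, ← mul_assoc, mul_smul, hF, smul_zero]
  obtain ⟨f, rfl⟩ : ∃ f, β = f + B := ⟨β - B, by omega⟩
  have hGAB : (x ^ A * y ^ B) • G = 0 := by
    rw [show G = F - H by rw [hFGH, add_sub_cancel_right], smul_sub, mul_smul (x ^ A) _ H, hH,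
      smul_zero, (hxy.pow_pow _ _).eq, mul_smul, hF, smul_zero, sub_zero]
  rw [hFGH, smul_add, hxy.pow_mul_pow_smul_eq_zero hGAB hG (by omega) (by omega), pow_add,
    ← mul_assoc, mul_smul, hH, smul_zero, zero_add]

theorem one_sub_pow_eq_sum {R : Type*} [Ring R] (e : R) (N : ℕ) :
    (1 - e) ^ N = ∑ s ∈ range (N + 1), ((-1) ^ s * N.choose s : ℤ) • e ^ s := by
  rw [sub_eq_neg_add, (Commute.one_right (-e)).add_pow]
  refine sum_congr rfl fun s _ => ?_
  rw [one_pow, mul_one, neg_pow, zsmul_eq_mul]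
  push_cast
  rw [mul_assoc, ← Nat.cast_comm, mul_assoc]

section Shift

variable {ι : Type*} (W : Type*) [AddCommGroup ι] [AddCommGroup W]

def shiftEnd (d : ι) : Module.End ℤ (ι → W) := LinearMap.funLeft ℤ W (· + d)

variable {W}

@[simp]
theorem shiftEnd_apply (d : ι) (G : ι → W) (p : ι) : shiftEnd W d G p = G (p + d) := rfl

variable (W)

theorem shiftEnd_zero : shiftEnd W (0 : ι) = 1 := by
  ext; simp

theorem shiftEnd_add (d e : ι) : shiftEnd W (d + e) = shiftEnd W d * shiftEnd W e := by
  ext; simp [add_assoc]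

theorem shiftEnd_nsmul (s : ℕ) (d : ι) : shiftEnd W (s • d) = shiftEnd W d ^ s := by
  induction s with
  | zero => rw [zero_smul, shiftEnd_zero, pow_zero]
  | succ s ih => rw [succ_nsmul, shiftEnd_add, ih, pow_succ]

theorem commute_shiftEnd (d e : ι) : Commute (shiftEnd W d) (shiftEnd W e) := by
  rw [commute_iff_eq, ← shiftEnd_add, ← shiftEnd_add, add_comm]

theorem commute_one_sub_shiftEnd (d e : ι) :
    Commute (1 - shiftEnd W d) (1 - shiftEnd W e) :=
  (Commute.one_left _).sub_left ((Commute.one_right _).sub_right (commute_shiftEnd W d e))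

theorem one_sub_shiftEnd_add_sub_mul (d e : ι) :
    (1 - shiftEnd W d) + (1 - shiftEnd W e) - (1 - shiftEnd W d) * (1 - shiftEnd W e)
      = 1 - shiftEnd W (d + e) := by
  rw [shiftEnd_add]; noncomm_ring

variable {W}

theorem one_sub_shiftEnd_pow_apply (d : ι) (N : ℕ) (G : ι → W) (p : ι) :
    ((1 - shiftEnd W d) ^ N) G p
      = ∑ s ∈ range (N + 1), ((-1) ^ s * N.choose s : ℤ) • G (p + s • d) := by
  rw [one_sub_pow_eq_sum, LinearMap.sum_apply, Finset.sum_apply]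
  refine sum_congr rfl fun s _ => ?_
  rw [LinearMap.smul_apply, Pi.smul_apply, ← shiftEnd_nsmul, shiftEnd_apply]

theorem one_sub_shiftEnd_neg_pow_eq_zero {d : ι} {N : ℕ} {G : ι → W}
    (h : ((1 - shiftEnd W d) ^ N) G = 0) : ((1 - shiftEnd W (-d)) ^ N) G = 0 := by
  have hfac : 1 - shiftEnd W (-d) = -shiftEnd W (-d) * (1 - shiftEnd W d) := by
    rw [neg_mul, mul_sub, mul_one, ← shiftEnd_add, neg_add_cancel, shiftEnd_zero]; abel
  have hcomm : Commute (-shiftEnd W (-d)) (1 - shiftEnd W d) :=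
    ((Commute.one_right _).sub_right (commute_shiftEnd W _ _)).neg_left
  rw [hfac, hcomm.mul_pow, Module.End.mul_apply, h, map_zero]

end Shift

section RightSymmetric

variable {K U : Type*} [Field K] [AddCommGroup U] [Module K U] {mul : U →ₗ[K] U →ₗ[K] U}

theorem locSum_eq_one_sub_shiftEnd_pow_apply (x y : ℤ → U) (N : ℕ) (n m : ℤ) :
    locSum mul x y N n m
      = ((1 - shiftEnd U ((-1, 1) : ℤ × ℤ)) ^ N) (fun p => mul (x p.1) (y p.2)) (n, m) := by
  rw [one_sub_shiftEnd_pow_apply, locSum]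
  refine sum_congr rfl fun s _ => ?_
  simp [sub_eq_add_neg]

theorem forall_locSum_eq_zero_iff (x y : ℤ → U) (N : ℕ) :
    (∀ n m, locSum mul x y N n m = 0)
      ↔ ((1 - shiftEnd U ((-1, 1) : ℤ × ℤ)) ^ N) (fun p => mul (x p.1) (y p.2)) = 0 := by
  simp only [locSum_eq_one_sub_shiftEnd_pow_apply, funext_iff, Prod.forall, Pi.zero_apply]

theorem mul_mul_eq_add_of_rightSymmetric
    (rsym : ∀ x y z : U, mul (mul x y) z - mul x (mul y z) = mul (mul x z) y - mul x (mul z y))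
    (x y z : U) : mul (mul x y) z = mul (mul x z) y + mul x (mul y z - mul z y) := by
  have h := rsym x y z
  rw [sub_eq_iff_eq_add] at h
  rw [h, map_sub]
  abel

variable {a b c : ℤ → U} {N : ℕ}

theorem one_sub_shiftEnd_pow_mul_mul_eq_zero (hab : ∀ n m, locSum mul a b N n m = 0) :
    ((1 - shiftEnd U ((-1, 1, 0) : ℤ × ℤ × ℤ)) ^ N)
      (fun p => mul (mul (a p.1) (b p.2.1)) (c p.2.2)) = 0 := by
  rw [forall_locSum_eq_zero_iff] at hab
  funext ⟨i, j, l⟩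
  have h := congrArg (mul.flip (c l)) (congrFun hab (i, j))
  rw [one_sub_shiftEnd_pow_apply, map_sum, Pi.zero_apply, map_zero] at h
  rw [one_sub_shiftEnd_pow_apply, Pi.zero_apply, ← h]
  refine sum_congr rfl fun s _ => ?_
  rw [map_zsmul, LinearMap.flip_apply]
  simp only [Prod.fst_add, Prod.snd_add, Prod.smul_fst, Prod.smul_snd, smul_zero, add_zero]

theorem one_sub_shiftEnd_pow_mul_mul_swap_eq_zero (hac : ∀ n m, locSum mul a c N n m = 0) :
    ((1 - shiftEnd U ((-1, 0, 1) : ℤ × ℤ × ℤ)) ^ N)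
      (fun p => mul (mul (a p.1) (c p.2.2)) (b p.2.1)) = 0 := by
  rw [forall_locSum_eq_zero_iff] at hac
  funext ⟨i, j, l⟩
  have h := congrArg (mul.flip (b j)) (congrFun hac (i, l))
  rw [one_sub_shiftEnd_pow_apply, map_sum, Pi.zero_apply, map_zero] at h
  rw [one_sub_shiftEnd_pow_apply, Pi.zero_apply, ← h]
  refine sum_congr rfl fun s _ => ?_
  rw [map_zsmul, LinearMap.flip_apply]
  simp only [Prod.fst_add, Prod.snd_add, Prod.smul_fst, Prod.smul_snd, smul_zero, add_zero]

theorem one_sub_shiftEnd_pow_mul_commutator_eq_zero (hbc : ∀ n m, locSum mul b c N n m = 0)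
    (hcb : ∀ n m, locSum mul c b N n m = 0) :
    ((1 - shiftEnd U ((0, -1, 1) : ℤ × ℤ × ℤ)) ^ N)
      (fun p => mul (a p.1) (mul (b p.2.1) (c p.2.2) - mul (c p.2.2) (b p.2.1))) = 0 := by
  rw [forall_locSum_eq_zero_iff] at hbc hcb
  replace hcb := one_sub_shiftEnd_neg_pow_eq_zero hcb
  funext ⟨i, j, l⟩
  have h := congrArg (mul (a i)) (congrArg₂ (· - ·) (congrFun hbc (j, l)) (congrFun hcb (l, j)))
  rw [one_sub_shiftEnd_pow_apply, one_sub_shiftEnd_pow_apply, ← sum_sub_distrib, map_sum,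
    Pi.zero_apply, Pi.zero_apply, sub_zero, map_zero] at h
  rw [one_sub_shiftEnd_pow_apply, Pi.zero_apply, ← h]
  refine sum_congr rfl fun s _ => ?_
  rw [← smul_sub, map_zsmul]
  simp only [Prod.fst_add, Prod.snd_add, Prod.smul_fst, Prod.smul_snd, Prod.fst_neg,
    Prod.snd_neg, neg_neg, smul_zero, add_zero, smul_neg]

theorem locSum_nProd_eq (n M : ℕ) (p q : ℤ) :
    locSum mul (nProd mul a b n) c M p q
      = ((1 - shiftEnd U ((0, -1, 1) : ℤ × ℤ × ℤ)) ^ M)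
          (((1 - shiftEnd U ((-1, 1, 0) : ℤ × ℤ × ℤ)) ^ n)
            (fun p => mul (mul (a p.1) (b p.2.1)) (c p.2.2))) (n, p, q) := by
  rw [one_sub_shiftEnd_pow_apply, locSum]
  refine sum_congr rfl fun t _ => ?_
  rw [one_sub_shiftEnd_pow_apply, nProd, locSum, map_sum, LinearMap.sum_apply]
  congr 1
  refine sum_congr rfl fun s _ => ?_
  rw [map_zsmul, LinearMap.smul_apply]
  simp [sub_eq_add_neg, add_assoc]

end RightSymmetric

theorem stmt_13_general (mul : V →ₗ[k] V →ₗ[k] V)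
    (rsym : ∀ x y z : V,
      mul (mul x y) z - mul x (mul y z) = mul (mul x z) y - mul x (mul z y))
    (a b c : ℤ → V) (Nab Nac Nbc : ℕ)
    (hab : ∀ n m : ℤ, locSum mul a b Nab n m = 0)
    (hac : ∀ n m : ℤ, locSum mul a c Nac n m = 0)
    (hbc : ∀ n m : ℤ, locSum mul b c Nbc n m = 0)
    (hcb : ∀ n m : ℤ, locSum mul c b Nbc n m = 0) :
    ∀ n : ℕ, ∀ p q : ℤ, locSum mul (nProd mul a b n) c (Nab + Nac + Nbc - n) p q = 0 := by
  intro n p q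
  have hG := one_sub_shiftEnd_pow_mul_mul_swap_eq_zero (b := b) hac
  rw [show ((-1, 0, 1) : ℤ × ℤ × ℤ) = (-1, 1, 0) + (0, -1, 1) from rfl,
    ← one_sub_shiftEnd_add_sub_mul] at hG
  have hcomm := commute_one_sub_shiftEnd V ((-1, 1, 0) : ℤ × ℤ × ℤ) (0, -1, 1)
  rw [locSum_nProd_eq, ← Module.End.mul_apply, ← (hcomm.pow_pow _ _).eq]
  refine congrFun (hcomm.pow_mul_pow_smul_eq_zero_of_eq_add ?_
    (one_sub_shiftEnd_pow_mul_mul_eq_zero hab)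
    (one_sub_shiftEnd_pow_mul_commutator_eq_zero (a := a) hbc hcb) hG ?_) _
  · exact funext fun p => mul_mul_eq_add_of_rightSymmetric rsym _ _ _
  · omega

/-- Let `V` be a right-symmetric (pre-Lie) algebra and `a(z), b(z), c(z)` pairwise
mutually local formal distributions over `V`, with locality values bounded by
`Nab, Nac, Nbc` (in both orders). Then for every `n ∈ ℤ₊` the pair `((a₍ₙ₎b)(z), c(z))`
is local with locality value at most `Nab + Nac + Nbc − n`. -/
theorem stmt_13 (mul : V →ₗ[k] V →ₗ[k] V)
    (rsym : ∀ x y z : V,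
      mul (mul x y) z - mul x (mul y z) = mul (mul x z) y - mul x (mul z y))
    (a b c : ℤ → V) (Nab Nac Nbc : ℕ)
    (hab : ∀ n m : ℤ, locSum mul a b Nab n m = 0)
    (hba : ∀ n m : ℤ, locSum mul b a Nab n m = 0)
    (hac : ∀ n m : ℤ, locSum mul a c Nac n m = 0)
    (hca : ∀ n m : ℤ, locSum mul c a Nac n m = 0)
    (hbc : ∀ n m : ℤ, locSum mul b c Nbc n m = 0)
    (hcb : ∀ n m : ℤ, locSum mul c b Nbc n m = 0) :
    ∀ n : ℕ, ∀ p q : ℤ, locSum mul (nProd mul a b n) c (Nab + Nac + Nbc - n) p q = 0 :=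
  stmt_13_general mul rsym a b c Nab Nac Nbc hab hac hbc hcb
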